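/- Under the discrete-time maximum-consensus update rule with weights satisfying 0 < a_j^(k) < 1, the Lyapunov function V[k] = Σ_{i=1}^n (α − x_i[k])², where α = max_{1 ≤ j ≤ n} x_j[0], is non-increasing in k: V[k+1] ≤ V[k] for all k ∈ ℕ. -/
import Mathlib


/-- Under the discrete-time maximum-consensus update rule with weights in
(0, 1), the Lyapunov function V[k] = Σ_i (α − x_i[k])², with α the maximum of
the initial states, is non-increasing in k. -/
theorem dt_maximum_consensus_lyapunov_nonincreasing
    (n : ℕ) (hn : 2 ≤ n)
    (G : SimpleGraph (Fin n)) [DecidableRel G.Adj]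
    (hconn : G.Connected)
    (x : ℕ → Fin n → ℝ)
    (a : ℕ → Fin n → ℝ)
    (ha : ∀ k j, 0 < a k j ∧ a k j < 1)
    (hdyn : ∀ i k, x (k + 1) i =
      x k i + (insert i (G.neighborFinset i)).sup'
        (Finset.insert_nonempty i _) (fun j => a k j * (x k j - x k i)))
    (α : ℝ)
    (hα : α = Finset.univ.sup' (Finset.univ_nonempty_iff.mpr ⟨⟨0, by omega⟩⟩)
        (fun j => x 0 j)) :
    ∀ k : ℕ, ∑ i, (α - x (k + 1) i) ^ 2 ≤ ∑ i, (α - x k i) ^ 2 := by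
  have hbd : ∀ k i, x k i ≤ α := by
    intro k
    induction k with
    | zero =>
      intro i
      rw [hα]
      exact Finset.le_sup' _ (Finset.mem_univ i)
    | succ k ih =>
      intro i
      rw [hdyn]
      have hsup : (insert i (G.neighborFinset i)).sup'
          (Finset.insert_nonempty i _) (fun j => a k j * (x k j - x k i)) ≤ α - x k i := by
        apply Finset.sup'_le
        intro j _
        rcases le_or_gt (x k i) (x k j) with h | h
        · nlinarith [(ha k j).1, (ha k j).2, ih j]
        · nlinarith [(ha k j).1, ih i]
      linarith
  have hlow : ∀ k i, x k i ≤ x (k + 1) i := by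
    intro k i
    rw [hdyn]
    have : (0 : ℝ) ≤ (insert i (G.neighborFinset i)).sup'
        (Finset.insert_nonempty i _) (fun j => a k j * (x k j - x k i)) := by
      have := Finset.le_sup' (fun j => a k j * (x k j - x k i))
        (Finset.mem_insert_self i (G.neighborFinset i))
      simpa using this
    linarith
  intro k
  apply Finset.sum_le_sum
  intro i _
  have h1 := hbd (k + 1) i
  have h2 := hlow k i
  nlinarith [hbd k i]
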